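/- arXiv:1912.07418 — 4 statements merged into one kernel-verified Lean document; each statement's English description precedes it below -/
import Mathlib

section
/- Fix a penalty parameter C > 0 and a bound M with 0 < M < ∞. The L_{0/1}-SVM problem of minimizing f(w,b) = (1/2)‖w‖² + C‖(1 − Aw − b y)_+‖₀ over all w ∈ ℝⁿ and b ∈ [−M, M] attains a global minimum, and the set of its global minimizers is a bounded subset of ℝⁿ × ℝ. -/
open Finset

noncomputable def l01norm {m : ℕ} (v : Fin m → ℝ) : ℕ :=
  (Finset.univ.filter fun i => 0 < v i).card

noncomputable def svmObj {m n : ℕ} (A : Matrix (Fin m) (Fin n) ℝ) (y : Fin m → ℝ)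
    (C : ℝ) (w : Fin n → ℝ) (b : ℝ) : ℝ :=
  (1 / 2) * (∑ j, (w j) ^ 2) +
    C * (l01norm (fun i => 1 - A.mulVec w i - b * y i) : ℝ)

/-!
The `‖·‖₀` term counts the coordinates lying in an open set, so it is lower semicontinuous and
the objective is too. Since it is nonnegative, the objective dominates `‖w‖² / 2`, so each of its
sublevel sets over `ℝⁿ × [-M, M]` is compact. A lower semicontinuous function attains its minimum
on the compact sublevel set through `(0, 0)`, which is then a global minimum, and every global
minimizer lies in that same compact set.
-/

theorem LowerSemicontinuousOn.exists_isMinOn_of_isCompact_sublevel {α β : Type*}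
    [TopologicalSpace α] [LinearOrder β] {f : α → β} {s : Set α} (hf : LowerSemicontinuousOn f s)
    {a : α} (ha : a ∈ s) (hK : IsCompact (s ∩ f ⁻¹' Set.Iic (f a))) :
    ∃ x ∈ s, IsMinOn f s x := by
  obtain ⟨x, ⟨hxs, hxa⟩, hmin⟩ :=
    LowerSemicontinuousOn.exists_isMinOn (s := s ∩ f ⁻¹' Set.Iic (f a)) ⟨a, ha, le_rfl⟩ hK
      (hf.mono Set.inter_subset_left)
  refine ⟨x, hxs, fun z hz => ?_⟩
  rcases le_total (f z) (f a) with hza | haz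
  · exact hmin ⟨hz, hza⟩
  · exact (hxa : f x ≤ f a).trans haz

theorem norm_le_sqrt_of_sum_sq_le {ι : Type*} [Fintype ι] {w : ι → ℝ} {c : ℝ}
    (h : ∑ j, w j ^ 2 ≤ c) : ‖w‖ ≤ √c :=
  (pi_norm_le_iff_of_nonneg (Real.sqrt_nonneg c)).2 fun j =>
    Real.abs_le_sqrt ((single_le_sum (fun k _ => sq_nonneg (w k)) (mem_univ j)).trans h)

theorem l01norm_eq_sum_indicator {m : ℕ} (v : Fin m → ℝ) :
    (l01norm v : ℝ) = ∑ i, {u : Fin m → ℝ | 0 < u i}.indicator 1 v := by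
  simp [l01norm, Set.indicator_apply]

theorem lowerSemicontinuous_l01norm {m : ℕ} :
    LowerSemicontinuous fun v : Fin m → ℝ => (l01norm v : ℝ) := by
  simp only [l01norm_eq_sum_indicator]
  exact lowerSemicontinuous_sum fun i _ =>
    (isOpen_lt continuous_const (continuous_apply i)).lowerSemicontinuous_indicator zero_le_one

section svmObj

variable {m n : ℕ} (A : Matrix (Fin m) (Fin n) ℝ) (y : Fin m → ℝ) {C : ℝ}

theorem svmObj_lowerSemicontinuous (hC : 0 ≤ C) :
    LowerSemicontinuous fun p : (Fin n → ℝ) × ℝ => svmObj A y C p.1 p.2 := by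
  have hmargin :
      Continuous fun p : (Fin n → ℝ) × ℝ => fun i => 1 - A.mulVec p.1 i - p.2 * y i := by
    fun_prop
  unfold svmObj
  exact (Continuous.lowerSemicontinuous (by fun_prop)).add <|
    (continuous_const_mul C).comp_lowerSemicontinuous
      (lowerSemicontinuous_l01norm.comp hmargin) (monotone_mul_left_of_nonneg hC)

theorem sum_sq_le_two_mul_svmObj (hC : 0 ≤ C) (w : Fin n → ℝ) (b : ℝ) :
    ∑ j, w j ^ 2 ≤ 2 * svmObj A y C w b := by
  have : 0 ≤ C * (l01norm (fun i => 1 - A.mulVec w i - b * y i) : ℝ) := by positivity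
  rw [svmObj]
  linarith

theorem isCompact_svmObj_sublevel (hC : 0 ≤ C) {B : Set ℝ} (hB : IsCompact B) (c : ℝ) :
    IsCompact ((Set.univ ×ˢ B) ∩
      (fun p : (Fin n → ℝ) × ℝ => svmObj A y C p.1 p.2) ⁻¹' Set.Iic c) := by
  refine ((isCompact_closedBall 0 √(2 * c)).prod hB).of_isClosed_subset
    ((isClosed_univ.prod hB.isClosed).inter
      ((svmObj_lowerSemicontinuous A y hC).isClosed_preimage c)) ?_
  rintro ⟨w, b⟩ ⟨⟨-, hb⟩, hc : svmObj A y C w b ≤ c⟩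
  refine ⟨mem_closedBall_zero_iff.2 (norm_le_sqrt_of_sum_sq_le ?_), hb⟩
  linarith [sum_sq_le_two_mul_svmObj A y hC w b]

end svmObj

theorem l01svm_minimizer_exists_and_bounded_general {m n : ℕ}
    (y : Fin m → ℝ)
    (A : Matrix (Fin m) (Fin n) ℝ)
    (C : ℝ) (hC : 0 < C) (M : ℝ) (hM : 0 < M) :
    (∃ wstar : Fin n → ℝ, ∃ bstar : ℝ, bstar ∈ Set.Icc (-M) M ∧
      ∀ w : Fin n → ℝ, ∀ b ∈ Set.Icc (-M) M,
        svmObj A y C wstar bstar ≤ svmObj A y C w b) ∧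
    Bornology.IsBounded {p : (Fin n → ℝ) × ℝ |
      p.2 ∈ Set.Icc (-M) M ∧
      ∀ w : Fin n → ℝ, ∀ b ∈ Set.Icc (-M) M,
        svmObj A y C p.1 p.2 ≤ svmObj A y C w b} := by
  have h0 : ((0 : Fin n → ℝ), (0 : ℝ)) ∈ (Set.univ : Set (Fin n → ℝ)) ×ˢ Set.Icc (-M) M :=
    ⟨trivial, by linarith, hM.le⟩
  have hK := isCompact_svmObj_sublevel A y hC.le (isCompact_Icc (a := -M) (b := M))
    (svmObj A y C 0 0)
  obtain ⟨⟨wstar, bstar⟩, ⟨-, hbstar⟩, hmin⟩ :=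
    ((svmObj_lowerSemicontinuous A y hC.le).lowerSemicontinuousOn _)
      |>.exists_isMinOn_of_isCompact_sublevel h0 hK
  refine ⟨⟨wstar, bstar, hbstar, fun w b hb => isMinOn_iff.1 hmin (w, b) ⟨trivial, hb⟩⟩, ?_⟩
  exact hK.isBounded.subset fun p ⟨hp, hpmin⟩ => ⟨⟨trivial, hp⟩, hpmin 0 0 h0.2⟩

/-- the `L_{0/1}`-SVM objective attains a global minimum over
`ℝⁿ × [-M, M]`, and the set of its global minimizers is bounded. -/
theorem l01svm_minimizer_exists_and_bounded {m n : ℕ}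
    (x : Fin m → Fin n → ℝ) (y : Fin m → ℝ) (hy : ∀ i, y i = 1 ∨ y i = -1)
    (A : Matrix (Fin m) (Fin n) ℝ) (hA : ∀ i j, A i j = y i * x i j)
    (C : ℝ) (hC : 0 < C) (M : ℝ) (hM : 0 < M) :
    (∃ wstar : Fin n → ℝ, ∃ bstar : ℝ, bstar ∈ Set.Icc (-M) M ∧
      ∀ w : Fin n → ℝ, ∀ b ∈ Set.Icc (-M) M,
        svmObj A y C wstar bstar ≤ svmObj A y C w b) ∧
    Bornology.IsBounded {p : (Fin n → ℝ) × ℝ |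
      p.2 ∈ Set.Icc (-M) M ∧
      ∀ w : Fin n → ℝ, ∀ b ∈ Set.Icc (-M) M,
        svmObj A y C p.1 p.2 ≤ svmObj A y C w b} :=
  l01svm_minimizer_exists_and_bounded_general y A C hC M hM
end

section
/- Let γ > 0, C > 0 and z ∈ ℝ^m. Define u* ∈ ℝ^m componentwise by u*_i = 0 if 0 < z_i ≤ √(2γC), and u*_i = z_i otherwise (i.e., if z_i ≤ 0 or z_i > √(2γC)). Then u* is a global minimizer over ℝ^m of the function u ↦ γC‖u_+‖₀ + (1/2)‖u − z‖², i.e., u* belongs to the set Prox_{γC‖(·)_+‖₀}(z). -/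
/-!
The objective is separable: it is the sum over coordinates of the scalar function
`t ↦ a·[t > 0] + (t - zᵢ)²/2` with `a = γC`. On `t > 0` this is minimised at `t = zᵢ` (value `a`),
on `t ≤ 0` at `t = min zᵢ 0` (value `(max zᵢ 0)²/2`), and `u*ᵢ` picks the better of the two, since
for `zᵢ > 0` the comparison `zᵢ²/2 ≤ a` reads `zᵢ ≤ √(2a)`.
-/

open Finset

noncomputable def l01ProxObjective (a z t : ℝ) : ℝ :=
  a * (if 0 < t then 1 else 0) + 1 / 2 * (t - z) ^ 2

lemma l01norm_eq_sum_ite {m : ℕ} (v : Fin m → ℝ) :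
    (l01norm v : ℝ) = ∑ i, if 0 < v i then (1 : ℝ) else 0 := by
  rw [Finset.sum_boole, l01norm]

lemma l01_objective_eq_sum {m : ℕ} (a : ℝ) (z u : Fin m → ℝ) :
    a * (l01norm u : ℝ) + 1 / 2 * ∑ i, (u i - z i) ^ 2 = ∑ i, l01ProxObjective a (z i) (u i) := by
  simp only [l01ProxObjective, l01norm_eq_sum_ite, Finset.mul_sum, Finset.sum_add_distrib]

lemma sq_le_sub_sq_of_nonpos_of_nonneg {t z : ℝ} (ht : t ≤ 0) (hz : 0 ≤ z) :
    z ^ 2 ≤ (t - z) ^ 2 := by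
  nlinarith

section Scalar

variable {a z : ℝ}

lemma l01ProxObjective_zero_le (hz : 0 < z) (hza : z ≤ Real.sqrt (2 * a)) (t : ℝ) :
    l01ProxObjective a z 0 ≤ l01ProxObjective a z t := by
  have hz2 : z ^ 2 ≤ 2 * a := (Real.le_sqrt' hz).1 hza
  simp only [l01ProxObjective, lt_irrefl, if_false]
  split_ifs with ht
  · nlinarith [sq_nonneg (t - z)]
  · nlinarith [sq_le_sub_sq_of_nonpos_of_nonneg (not_lt.1 ht) hz.le]

lemma l01ProxObjective_self_le (ha : 0 ≤ a) (hz : ¬(0 < z ∧ z ≤ Real.sqrt (2 * a))) (t : ℝ) :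
    l01ProxObjective a z z ≤ l01ProxObjective a z t := by
  unfold l01ProxObjective
  split_ifs with hzpos ht ht
  · nlinarith [sq_nonneg (t - z)]
  · have h2a : 2 * a < z ^ 2 := (Real.sqrt_lt' hzpos).1 (lt_of_not_ge (hz ⟨hzpos, ·⟩))
    nlinarith [sq_le_sub_sq_of_nonpos_of_nonneg (not_lt.1 ht) hzpos.le]
  · nlinarith [sq_nonneg (t - z)]
  · nlinarith [sq_nonneg (t - z)]

end Scalar

/-- the componentwise formula gives an element of the `L_{0/1}`
proximal operator, i.e. a global minimizer of
`u ↦ γC‖u₊‖₀ + (1/2)‖u − z‖²` over `ℝ^m`. -/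
theorem l01_prox_formula {m : ℕ} (γ C : ℝ) (hγ : 0 < γ) (hC : 0 < C)
    (z ustar : Fin m → ℝ)
    (h0 : ∀ i, (0 < z i ∧ z i ≤ Real.sqrt (2 * γ * C)) → ustar i = 0)
    (hid : ∀ i, ¬(0 < z i ∧ z i ≤ Real.sqrt (2 * γ * C)) → ustar i = z i) :
    ∀ u : Fin m → ℝ,
      γ * C * (l01norm ustar : ℝ) + (1 / 2) * ∑ i, (ustar i - z i) ^ 2
        ≤ γ * C * (l01norm u : ℝ) + (1 / 2) * ∑ i, (u i - z i) ^ 2 := by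
  intro u
  rw [l01_objective_eq_sum, l01_objective_eq_sum]
  refine Finset.sum_le_sum fun i _ => ?_
  simp only [mul_assoc] at h0 hid
  by_cases hi : 0 < z i ∧ z i ≤ Real.sqrt (2 * (γ * C))
  · rw [h0 i hi]
    exact l01ProxObjective_zero_le hi.1 hi.2 (u i)
  · rw [hid i hi]
    exact l01ProxObjective_self_le (mul_pos hγ hC).le hi (u i)
end

section
/- Let C > 0 and let g : ℝ^m → ℝ be convex and differentiable. If u* ∈ ℝ^m is a P-stationary point with some parameter γ > 0 of the problem min_{u∈ℝ^m} g(u) + C‖u_+‖₀, then u* is a local minimizer of u ↦ g(u) + C‖u_+‖₀. -/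
open Finset

/-!
P-stationarity forces every coordinate of `∇g(u*)` either to vanish or to be negative at a
coordinate where `u*` vanishes. By convexity `g` lies above its tangent plane at `u*`, so it
suffices to show that the linearized objective `⟪∇g(u*), u⟫ + C‖u₊‖₀` has a local minimum at `u*`.
That objective is separable, and each summand `t ↦ a t + C·[t > 0]` has a local minimum at `u*ᵢ`:
for `a = 0` the penalty cannot drop near `u*ᵢ`, and for `u*ᵢ = 0`, `a < 0` the jump `C` outweighs
the linear decrease `a t` as long as `t < C / |a|`.
-/

theorem ConvexOn.add_apply_sub_le_of_hasFDerivAt {E : Type*} [NormedAddCommGroup E]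
    [NormedSpace ℝ E] {f : E → ℝ} {f' : E →L[ℝ] ℝ} {x : E} (hf : ConvexOn ℝ Set.univ f)
    (hx : HasFDerivAt f f' x) (y : E) :
    f x + f' (y - x) ≤ f y := by
  have hline : ConvexOn ℝ Set.univ (f ∘ AffineMap.lineMap (k := ℝ) x y) := by
    simpa using hf.comp_affineMap (AffineMap.lineMap (k := ℝ) x y)
  have hderiv : HasDerivAt (f ∘ AffineMap.lineMap (k := ℝ) x y) (f' (y - x)) 0 := by
    refine HasFDerivAt.comp_hasDerivAt (0 : ℝ) ?_ (AffineMap.hasDerivAt_lineMap)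
    simpa using hx
  have hslope := hline.le_slope_of_hasDerivAt (Set.mem_univ 0) (Set.mem_univ 1) one_pos hderiv
  simp only [slope, Function.comp_apply, AffineMap.lineMap_apply_one,
    AffineMap.lineMap_apply_zero, vsub_eq_sub, sub_zero, inv_one, one_smul] at hslope
  linarith

theorem IsLocalMin.add_of_convexOn_of_hasFDerivAt {E : Type*} [NormedAddCommGroup E]
    [NormedSpace ℝ E] {g h : E → ℝ} {L : E →L[ℝ] ℝ} {x : E} (hg : ConvexOn ℝ Set.univ g)
    (hL : HasFDerivAt g L x) (hmin : IsLocalMin (fun u => L u + h u) x) :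
    IsLocalMin (fun u => g u + h u) x :=
  hmin.mono fun u hu => by
    have htangent := hg.add_apply_sub_le_of_hasFDerivAt hL u
    rw [map_sub] at htangent
    dsimp only at hu ⊢
    linarith

theorem isLocalMin_finset_sum {X ι β : Type*} [TopologicalSpace X] [AddCommMonoid β]
    [PartialOrder β] [IsOrderedAddMonoid β] {s : Finset ι} {f : ι → X → β} {x : X}
    (h : ∀ i ∈ s, IsLocalMin (f i) x) :
    IsLocalMin (fun y => ∑ i ∈ s, f i y) x :=
  (s.eventually_all.2 h).mono fun _ hy => Finset.sum_le_sum hy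

theorem isLocalMin_mul_add_ite_pos {a x C : ℝ} (hC : 0 < C) (h : a = 0 ∨ x = 0 ∧ a < 0) :
    IsLocalMin (fun t => a * t + if 0 < t then C else 0) x := by
  rcases h with rfl | ⟨rfl, ha⟩
  · by_cases hx : 0 < x
    · filter_upwards [eventually_gt_nhds hx] with t ht
      simp [hx, ht]
    · filter_upwards with t
      simp only [zero_mul, zero_add, if_neg hx]
      split_ifs <;> linarith
  · filter_upwards [eventually_lt_nhds (div_pos hC (neg_pos.2 ha))] with t ht
    simp only [mul_zero, lt_irrefl, if_false, add_zero]
    split_ifs with htpos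
    · rw [lt_div_iff₀ (neg_pos.2 ha)] at ht
      linarith
    · nlinarith

theorem mul_l01norm_eq_sum {m : ℕ} (C : ℝ) (v : Fin m → ℝ) :
    C * (l01norm v : ℝ) = ∑ i, if 0 < v i then C else 0 := by
  rw [l01norm, Finset.card_filter, Nat.cast_sum, Finset.mul_sum]
  simp

theorem isLocalMin_inner_add_mul_l01norm {m : ℕ} {C : ℝ} (hC : 0 < C)
    {a x : EuclideanSpace ℝ (Fin m)} (h : ∀ i, a i = 0 ∨ x i = 0 ∧ a i < 0) :
    IsLocalMin (fun u : EuclideanSpace ℝ (Fin m) =>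
      inner ℝ a u + C * (l01norm (fun i => u i) : ℝ)) x := by
  have hsep : (fun u : EuclideanSpace ℝ (Fin m) =>
      inner ℝ a u + C * (l01norm (fun i => u i) : ℝ)) =
      fun u => ∑ i, (a i * u i + if 0 < u i then C else 0) := by
    ext u
    simp [PiLp.inner_apply, mul_l01norm_eq_sum, Finset.sum_add_distrib, mul_comm]
  rw [hsep]
  exact isLocalMin_finset_sum fun i _ =>
    (isLocalMin_mul_add_ite_pos hC (h i)).comp_continuous
      (g := fun u : EuclideanSpace ℝ (Fin m) => u i) (by fun_prop)

theorem eq_zero_or_neg_of_pStationary_coord {u d γ τ : ℝ} (hγ : 0 < γ)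
    (h0 : 0 < u - γ * d ∧ u - γ * d ≤ τ → u = 0)
    (hid : ¬(0 < u - γ * d ∧ u - γ * d ≤ τ) → u = u - γ * d) :
    d = 0 ∨ u = 0 ∧ d < 0 := by
  by_cases hz : 0 < u - γ * d ∧ u - γ * d ≤ τ
  · have hu := h0 hz
    have hz₁ := hz.1
    rw [hu] at hz₁
    exact Or.inr ⟨hu, by nlinarith⟩
  · have hγd : γ * d = 0 := by linarith [hid hz]
    exact Or.inl ((mul_eq_zero.1 hγd).resolve_left hγ.ne')

/-- if `g` is convex and differentiable and `u*` is a P-stationary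
point (with some parameter `γ > 0`) of `min g(u) + C‖u₊‖₀`, then `u*` is a local
minimizer of `u ↦ g(u) + C‖u₊‖₀`. -/
theorem PStationary_is_local_min_general {m : ℕ} (C : ℝ) (hC : 0 < C)
    (g : EuclideanSpace ℝ (Fin m) → ℝ)
    (hconv : ConvexOn ℝ Set.univ g)
    (g' : EuclideanSpace ℝ (Fin m) → EuclideanSpace ℝ (Fin m))
    (hg : ∀ u, HasGradientAt g (g' u) u)
    (ustar : EuclideanSpace ℝ (Fin m)) (γ : ℝ) (hγ : 0 < γ)
    (h0 : ∀ i, (0 < ustar i - γ * g' ustar i ∧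
        ustar i - γ * g' ustar i ≤ Real.sqrt (2 * γ * C)) → ustar i = 0)
    (hid : ∀ i, ¬(0 < ustar i - γ * g' ustar i ∧
        ustar i - γ * g' ustar i ≤ Real.sqrt (2 * γ * C)) →
        ustar i = ustar i - γ * g' ustar i) :
    IsLocalMin (fun u : EuclideanSpace ℝ (Fin m) =>
      g u + C * (l01norm (fun i => u i) : ℝ)) ustar := by
  have hsign : ∀ i, g' ustar i = 0 ∨ ustar i = 0 ∧ g' ustar i < 0 := fun i =>
    eq_zero_or_neg_of_pStationary_coord hγ (h0 i) (hid i)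
  refine IsLocalMin.add_of_convexOn_of_hasFDerivAt hconv (hg ustar).hasFDerivAt ?_
  simpa only [InnerProductSpace.toDual_apply_apply] using
    isLocalMin_inner_add_mul_l01norm hC hsign
end

section
/- Let σ > 0, let w^k ∈ ℝⁿ, b^k ∈ ℝ, λ^k ∈ ℝ^m, let T ⊆ {1,…,m} with complement T̄, and let A_T (resp. A_{T̄}) denote the submatrix of A consisting of the rows indexed by T (resp. T̄). Define z = 1 − Aw^k − b^k y − λ^k/σ and suppose u ∈ ℝ^m satisfies u_i = z_i for all i ∈ T̄. Define v = −(u + b^k y − 1 + λ^k/σ) and the function L(w) = (1/2)‖w‖² − (σ/2)‖A_{T̄}(w − w^k)‖² + ⟨λ^k, Aw⟩ + (σ/2)‖u − 1 + Aw + b^k y‖². Then the matrix I + σ A_Tᵀ A_T is positive definite, and w ∈ ℝⁿ is a global minimizer of L if and only if (I + σ A_Tᵀ A_T) w = σ A_Tᵀ v_T, where v_T is the subvector of v indexed by T; in particular L has a unique global minimizer. -/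
open Finset Matrix

/-!
On the rows outside `T` the indefinite proximal term `-(σ/2)‖A_{T̄}(w - wᵏ)‖²` exactly cancels
the quadratic part of the penalty, so up to a constant `L` is the quadratic
`½ wᵀ M w - σ ⟨A_Tᵀ v_T, w⟩` with `M = I + σ A_Tᵀ A_T` positive definite. Completing the square
around the solution of `M w = σ A_Tᵀ v_T` shows that such a quadratic is minimized exactly there.
-/

section QuadraticMinimization

variable {ι : Type*} [Fintype ι]

theorem Matrix.IsHermitian.half_dotProduct_mulVec_sub_dotProduct_eq {M : Matrix ι ι ℝ}
    (hM : M.IsHermitian) {c w₀ : ι → ℝ} (hw₀ : M *ᵥ w₀ = c) (w : ι → ℝ) :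
    (1 / 2) * (w ⬝ᵥ M *ᵥ w) - c ⬝ᵥ w =
      (1 / 2) * ((w - w₀) ⬝ᵥ M *ᵥ (w - w₀)) - (1 / 2) * (w₀ ⬝ᵥ M *ᵥ w₀) := by
  have hsymm : w₀ ⬝ᵥ M *ᵥ w = w ⬝ᵥ M *ᵥ w₀ := by
    rw [dotProduct_mulVec, ← mulVec_transpose, ← conjTranspose_eq_transpose_of_trivial, hM,
      dotProduct_comm]
  subst hw₀
  simp only [mulVec_sub, sub_dotProduct, dotProduct_sub, hsymm, dotProduct_comm _ w]
  ring

variable [DecidableEq ι] {M : Matrix ι ι ℝ}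

theorem Matrix.PosDef.forall_le_iff_mulVec_eq (hM : M.PosDef) {f : (ι → ℝ) → ℝ}
    {c : ι → ℝ} {C : ℝ} (hf : ∀ w, f w = (1 / 2) * (w ⬝ᵥ M *ᵥ w) - c ⬝ᵥ w + C) (w : ι → ℝ) :
    (∀ w', f w ≤ f w') ↔ M *ᵥ w = c := by
  obtain ⟨w₀, hw₀⟩ := mulVec_surjective_iff_isUnit.2 hM.isUnit c
  have hf₀ : ∀ w', f w' =
      (1 / 2) * ((w' - w₀) ⬝ᵥ M *ᵥ (w' - w₀)) - (1 / 2) * (w₀ ⬝ᵥ M *ᵥ w₀) + C :=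
    fun w' => by rw [hf, hM.isHermitian.half_dotProduct_mulVec_sub_dotProduct_eq hw₀]
  have hq : ∀ g : ι → ℝ, 0 ≤ g ⬝ᵥ M *ᵥ g := hM.posSemidef.dotProduct_mulVec_nonneg
  calc (∀ w', f w ≤ f w') ↔ (w - w₀) ⬝ᵥ M *ᵥ (w - w₀) ≤ 0 := by
        refine ⟨fun h => ?_, fun h w' => ?_⟩
        · have h₀ := h w₀
          rw [hf₀, hf₀, sub_self, zero_dotProduct] at h₀
          linarith
        · rw [hf₀, hf₀]; linarith [hq (w' - w₀)]
    _ ↔ w = w₀ := by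
        rw [← sub_eq_zero]
        exact ⟨fun h => of_not_not fun hne => (hM.dotProduct_mulVec_pos hne).not_ge h,
          fun h => by rw [h, zero_dotProduct]⟩
    _ ↔ M *ᵥ w = c := by
        rw [← hw₀]; exact (mulVec_injective_iff_isUnit.2 hM.isUnit).eq_iff.symm

theorem Matrix.PosDef.existsUnique_forall_le (hM : M.PosDef) {f : (ι → ℝ) → ℝ}
    {c : ι → ℝ} {C : ℝ} (hf : ∀ w, f w = (1 / 2) * (w ⬝ᵥ M *ᵥ w) - c ⬝ᵥ w + C) :
    ∃! w, ∀ w', f w ≤ f w' := by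
  simp only [hM.forall_le_iff_mulVec_eq hf]
  exact Function.Bijective.existsUnique
    ⟨mulVec_injective_iff_isUnit.2 hM.isUnit, mulVec_surjective_iff_isUnit.2 hM.isUnit⟩ c

variable {κ : Type*} [Fintype κ]

theorem Matrix.posDef_one_add_smul_transpose_mul_self (B : Matrix κ ι ℝ)
    {σ : ℝ} (hσ : 0 ≤ σ) : (1 + σ • (Bᵀ * B)).PosDef :=
  PosDef.one.add_posSemidef ((posSemidef_conjTranspose_mul_self B).smul hσ)

theorem Matrix.half_dotProduct_one_add_smul_mulVec_sub_dotProduct (B : Matrix κ ι ℝ) (σ : ℝ)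
    (v : κ → ℝ) (w : ι → ℝ) :
    (1 / 2) * (w ⬝ᵥ (1 + σ • (Bᵀ * B)) *ᵥ w) - (σ • Bᵀ *ᵥ v) ⬝ᵥ w =
      (1 / 2) * (w ⬝ᵥ w) + (σ / 2) * (B *ᵥ w ⬝ᵥ B *ᵥ w) - σ * (v ⬝ᵥ B *ᵥ w) := by
  simp only [add_mulVec, one_mulVec, smul_mulVec, ← mulVec_mulVec, dotProduct_add,
    dotProduct_smul, smul_dotProduct, dotProduct_mulVec _ Bᵀ, vecMul_transpose, smul_eq_mul]
  rw [mulVec_transpose, ← dotProduct_mulVec]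
  ring

end QuadraticMinimization

theorem Finset.dotProduct_restrict {m R : Type*} [NonUnitalNonAssocSemiring R] (T : Finset m)
    (f g : m → R) : (fun i : T => f i) ⬝ᵥ (fun i : T => g i) = ∑ i ∈ T, f i * g i :=
  sum_coe_sort T fun i => f i * g i

theorem admm_w_objective_eq_quadratic {m n : ℕ} (A : Matrix (Fin m) (Fin n) ℝ) (y : Fin m → ℝ)
    {σ : ℝ} (hσ : σ ≠ 0) (wk : Fin n → ℝ) (bk : ℝ) (lam : Fin m → ℝ) (T : Finset (Fin m))
    {z u v : Fin m → ℝ} (hz : ∀ i, z i = 1 - A.mulVec wk i - bk * y i - lam i / σ)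
    (hu : ∀ i ∉ T, u i = z i) (hv : ∀ i, v i = -(u i + bk * y i - 1 + lam i / σ))
    {L : (Fin n → ℝ) → ℝ}
    (hL : ∀ w, L w =
      (1 / 2) * (∑ j, (w j) ^ 2)
        - (σ / 2) * (∑ i ∈ Tᶜ, (A.mulVec (w - wk) i) ^ 2)
        + (∑ i, lam i * A.mulVec w i)
        + (σ / 2) * (∑ i, (u i - 1 + A.mulVec w i + bk * y i) ^ 2)) :
    ∃ C, ∀ w, L w = (1 / 2) * ∑ j, w j ^ 2 + (σ / 2) * ∑ i ∈ T, (A *ᵥ w) i ^ 2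
      - σ * ∑ i ∈ T, v i * (A *ᵥ w) i + C := by
  refine ⟨∑ i ∈ Tᶜ, (lam i * (A *ᵥ wk) i + lam i ^ 2 / (2 * σ))
    + (σ / 2) * ∑ i ∈ T, (v i + lam i / σ) ^ 2, fun w => ?_⟩
  have hoff : ∀ i ∈ Tᶜ, (σ / 2) * (u i - 1 + (A *ᵥ w) i + bk * y i) ^ 2
      - (σ / 2) * (A *ᵥ (w - wk)) i ^ 2 + lam i * (A *ᵥ w) i
      = lam i * (A *ᵥ wk) i + lam i ^ 2 / (2 * σ) := fun i hi => by
    rw [hu i (mem_compl.1 hi), hz i, mulVec_sub, Pi.sub_apply]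
    field_simp
    ring
  have hon : ∀ i ∈ T, (σ / 2) * (u i - 1 + (A *ᵥ w) i + bk * y i) ^ 2 + lam i * (A *ᵥ w) i
      = (σ / 2) * (A *ᵥ w) i ^ 2 - σ * (v i * (A *ᵥ w) i) + (σ / 2) * (v i + lam i / σ) ^ 2 :=
    fun i _ => by
      rw [show u i = -v i - bk * y i + 1 - lam i / σ by linarith [hv i]]
      field_simp
      ring
  have hsum_off := sum_congr rfl hoff
  have hsum_on := sum_congr rfl hon
  simp only [sum_add_distrib, sum_sub_distrib, ← mul_sum] at hsum_off hsum_on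
  rw [hL, ← sum_add_sum_compl T, ← sum_add_sum_compl T (fun i => (_ : ℝ) ^ 2), sum_add_distrib]
  linear_combination hsum_off + hsum_on

theorem admm_w_subproblem_general {m n : ℕ}
    (y : Fin m → ℝ)
    (A : Matrix (Fin m) (Fin n) ℝ)
    (σ : ℝ) (hσ : 0 < σ)
    (wk : Fin n → ℝ) (bk : ℝ) (lam : Fin m → ℝ)
    (T : Finset (Fin m))
    (z u v : Fin m → ℝ)
    (hz : ∀ i, z i = 1 - A.mulVec wk i - bk * y i - lam i / σ)
    (hu : ∀ i ∉ T, u i = z i)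
    (hv : ∀ i, v i = -(u i + bk * y i - 1 + lam i / σ))
    (L : (Fin n → ℝ) → ℝ)
    (hL : ∀ w, L w =
      (1 / 2) * (∑ j, (w j) ^ 2)
        - (σ / 2) * (∑ i ∈ Tᶜ, (A.mulVec (w - wk) i) ^ 2)
        + (∑ i, lam i * A.mulVec w i)
        + (σ / 2) * (∑ i, (u i - 1 + A.mulVec w i + bk * y i) ^ 2))
    (M : Matrix (Fin n) (Fin n) ℝ)
    (hM : ∀ j k, M j k = (if j = k then 1 else 0) + σ * ∑ i ∈ T, A i j * A i k) :
    M.PosDef ∧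
    (∀ w : Fin n → ℝ,
      (∀ w' : Fin n → ℝ, L w ≤ L w') ↔
        M.mulVec w = fun j => σ * ∑ i ∈ T, A i j * v i) ∧
    (∃! w : Fin n → ℝ, ∀ w' : Fin n → ℝ, L w ≤ L w') := by
  set A_T := A.submatrix ((↑) : T → Fin m) id
  have hM_eq : M = 1 + σ • (A_Tᵀ * A_T) := by
    ext j k
    rw [hM, Matrix.add_apply, one_apply, Matrix.smul_apply, smul_eq_mul]
    exact congrArg (_ + σ * ·) (T.dotProduct_restrict (A · j) (A · k)).symm
  have hc : σ • A_Tᵀ *ᵥ (fun i : T => v i) = fun j => σ * ∑ i ∈ T, A i j * v i := by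
    ext j
    exact congrArg (σ * ·) (T.dotProduct_restrict (A · j) v)
  obtain ⟨C, hC⟩ := admm_w_objective_eq_quadratic A y hσ.ne' wk bk lam T hz hu hv hL
  have hL_quad : ∀ w, L w = (1 / 2) * (w ⬝ᵥ M *ᵥ w)
      - (fun j => σ * ∑ i ∈ T, A i j * v i) ⬝ᵥ w + C := fun w => by
    rw [hC, hM_eq, ← hc, half_dotProduct_one_add_smul_mulVec_sub_dotProduct]
    have hA_T : A_T *ᵥ w = fun i : T => (A *ᵥ w) i := rfl
    rw [hA_T, T.dotProduct_restrict, T.dotProduct_restrict]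
    simp only [dotProduct, sq]
  have hpd : M.PosDef := hM_eq ▸ posDef_one_add_smul_transpose_mul_self A_T hσ.le
  exact ⟨hpd, hpd.forall_le_iff_mulVec_eq hL_quad, hpd.existsUnique_forall_le hL_quad⟩

/-- the `w`-subproblem of `L_{0/1}`ADMM. The matrix
`I + σ A_Tᵀ A_T` is positive definite, and `w` globally minimizes the subproblem
objective `L` iff `(I + σ A_Tᵀ A_T) w = σ A_Tᵀ v_T`; in particular `L` has a
unique global minimizer. -/
theorem admm_w_subproblem {m n : ℕ}
    (x : Fin m → Fin n → ℝ) (y : Fin m → ℝ) (hy : ∀ i, y i = 1 ∨ y i = -1)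
    (A : Matrix (Fin m) (Fin n) ℝ) (hA : ∀ i j, A i j = y i * x i j)
    (σ : ℝ) (hσ : 0 < σ)
    (wk : Fin n → ℝ) (bk : ℝ) (lam : Fin m → ℝ)
    (T : Finset (Fin m))
    (z u v : Fin m → ℝ)
    (hz : ∀ i, z i = 1 - A.mulVec wk i - bk * y i - lam i / σ)
    (hu : ∀ i ∉ T, u i = z i)
    (hv : ∀ i, v i = -(u i + bk * y i - 1 + lam i / σ))
    (L : (Fin n → ℝ) → ℝ)
    (hL : ∀ w, L w =
      (1 / 2) * (∑ j, (w j) ^ 2)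
        - (σ / 2) * (∑ i ∈ Tᶜ, (A.mulVec (w - wk) i) ^ 2)
        + (∑ i, lam i * A.mulVec w i)
        + (σ / 2) * (∑ i, (u i - 1 + A.mulVec w i + bk * y i) ^ 2))
    (M : Matrix (Fin n) (Fin n) ℝ)
    (hM : ∀ j k, M j k = (if j = k then 1 else 0) + σ * ∑ i ∈ T, A i j * A i k) :
    M.PosDef ∧
    (∀ w : Fin n → ℝ,
      (∀ w' : Fin n → ℝ, L w ≤ L w') ↔
        M.mulVec w = fun j => σ * ∑ i ∈ T, A i j * v i) ∧
    (∃! w : Fin n → ℝ, ∀ w' : Fin n → ℝ, L w ≤ L w') :=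
  admm_w_subproblem_general y A σ hσ wk bk lam T z u v hz hu hv L hL M hM
end
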